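/- The complement ℝ^4 ∖ ⋃_{L ∈ 𝒞_3^2} L of the union of the hyperplanes of the center-of-mass arrangement 𝒞_3^2 has exactly 48 connected components. -/

import Mathlib

/-- The hyperplane `L_{I,J} = {x ∈ ℝ⁴ : |J|·Σ_{i∈I} x_i = |I|·Σ_{j∈J} x_j}`. -/
def hyperplaneL (I J : Finset (Fin 4)) : Set (Fin 4 → ℝ) :=
  {x | (J.card : ℝ) * ∑ i ∈ I, x i = (I.card : ℝ) * ∑ j ∈ J, x j}

/-- The complement `ℝ⁴ ∖ ⋃_{L ∈ 𝒞₃²} L` of the union of the hyperplanes of the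
center-of-mass arrangement `𝒞₃² = {L_{I,J} : I, J ⊆ {1,…,4}, |I| = |J| = 2, I ≠ J}`. -/
def arrangementComplement : Set (Fin 4 → ℝ) :=
  {x | ∀ I J : Finset (Fin 4), I.card = 2 → J.card = 2 → I ≠ J → x ∉ hyperplaneL I J}

/-- The open region of the arrangement indexed by an ordering `σ` and a bit `b`. -/
def region (σ : Equiv.Perm (Fin 4)) (b : Bool) : Set (Fin 4 → ℝ) :=
  {x | x (σ 0) < x (σ 1) ∧ x (σ 1) < x (σ 2) ∧ x (σ 2) < x (σ 3) ∧
    (if b then x (σ 0) + x (σ 3) < x (σ 1) + x (σ 2)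
     else x (σ 1) + x (σ 2) < x (σ 0) + x (σ 3))}

lemma comb_lt {a b u v u' v' : ℝ} (ha : 0 ≤ a) (hb : 0 ≤ b) (hab : a + b = 1)
    (h1 : u < u') (h2 : v < v') : a * u + b * v < a * u' + b * v' := by
  rcases ha.lt_or_eq with h | h
  · nlinarith [mul_le_mul_of_nonneg_left h2.le hb, mul_lt_mul_of_pos_left h1 h]
  · have hb1 : b = 1 := by linarith
    rw [← h, hb1]; ring_nf; linarith

lemma region_convex (σ : Equiv.Perm (Fin 4)) (b : Bool) : Convex ℝ (region σ b) := by
  rintro x ⟨h1, h2, h3, h4⟩ y ⟨g1, g2, g3, g4⟩ a c ha hc hac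
  simp only [region, Set.mem_setOf_eq, Pi.add_apply, Pi.smul_apply, smul_eq_mul]
  refine ⟨comb_lt ha hc hac h1 g1, comb_lt ha hc hac h2 g2, comb_lt ha hc hac h3 g3, ?_⟩
  cases b <;> simp only [if_true, if_false, Bool.false_eq_true] at h4 g4 ⊢ <;>
    · have := comb_lt ha hc hac h4 g4
      ring_nf at this ⊢
      linarith

lemma region_open (σ : Equiv.Perm (Fin 4)) (b : Bool) : IsOpen (region σ b) := by
  have h : ∀ i j : Fin 4, IsOpen {x : Fin 4 → ℝ | x i < x j} :=
    fun i j => isOpen_lt (continuous_apply i) (continuous_apply j)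
  have h2 : ∀ i j k l : Fin 4, IsOpen {x : Fin 4 → ℝ | x i + x j < x k + x l} :=
    fun i j k l => isOpen_lt ((continuous_apply i).add (continuous_apply j))
      ((continuous_apply k).add (continuous_apply l))
  cases b
  · exact (h _ _).inter ((h _ _).inter ((h _ _).inter (by exact h2 (σ 1) (σ 2) (σ 0) (σ 3))))
  · exact (h _ _).inter ((h _ _).inter ((h _ _).inter (by exact h2 (σ 0) (σ 3) (σ 1) (σ 2))))

/-- Witness values for the two kinds of regions. -/
def vals : Bool → Fin 4 → ℝ
  | true => ![0, 2, 3, 4]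
  | false => ![0, 1, 2, 4]

/-- A witness point in each region. -/
def pt (σ : Equiv.Perm (Fin 4)) (b : Bool) : Fin 4 → ℝ := fun i => vals b (σ.symm i)

lemma pt_mem (σ : Equiv.Perm (Fin 4)) (b : Bool) : pt σ b ∈ region σ b := by
  cases b <;> simp [region, pt, vals, Equiv.symm_apply_apply] <;> norm_num

set_option maxHeartbeats 1000000 in
lemma key (y : Fin 4 → ℝ) (h01 : y 0 < y 1) (h12 : y 1 < y 2) (h23 : y 2 < y 3)
    (hb : y 0 + y 3 ≠ y 1 + y 2) :
    ∀ a b c d : Fin 4, a ≠ b → c ≠ d → ({a, b} : Finset (Fin 4)) ≠ {c, d} →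
      y a + y b ≠ y c + y d := by
  intro a b c d hab hcd hne heq
  fin_cases a <;> fin_cases b <;> fin_cases c <;> fin_cases d <;> simp_all <;>
    first
      | exact hne (by decide)
      | exact hb (by linarith)
      | linarith

/-- Every point of the complement has pairwise distinct coordinates. -/
lemma inj_of_mem {x : Fin 4 → ℝ} (hx : x ∈ arrangementComplement) : Function.Injective x := by
  intro i j hij
  by_contra hne
  obtain ⟨k, hki, hkj⟩ : ∃ k : Fin 4, k ≠ i ∧ k ≠ j := by
    fin_cases i <;> fin_cases j <;> decide
  refine hx {i, k} {j, k} (Finset.card_pair (Ne.symm hki)) (Finset.card_pair (Ne.symm hkj))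
    ?_ ?_
  · intro h
    have : i ∈ ({j, k} : Finset (Fin 4)) := h ▸ Finset.mem_insert_self i {k}
    rcases Finset.mem_insert.mp this with h' | h'
    · exact hne h'
    · exact hki.symm (Finset.mem_singleton.mp h')
  · show (_ : ℝ) * _ = _
    rw [Finset.card_pair (Ne.symm hki), Finset.card_pair (Ne.symm hkj),
      Finset.sum_pair (Ne.symm hki), Finset.sum_pair (Ne.symm hkj), hij]

lemma pairsum_ne {x : Fin 4 → ℝ} (hx : x ∈ arrangementComplement) (σ : Equiv.Perm (Fin 4)) :
    x (σ 0) + x (σ 3) ≠ x (σ 1) + x (σ 2) := by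
  intro h
  have h03 : σ 0 ≠ σ 3 := σ.injective.ne (by decide)
  have h12 : σ 1 ≠ σ 2 := σ.injective.ne (by decide)
  refine hx {σ 0, σ 3} {σ 1, σ 2} (Finset.card_pair h03) (Finset.card_pair h12) ?_ ?_
  · intro he
    have : σ 0 ∈ ({σ 1, σ 2} : Finset (Fin 4)) := he ▸ Finset.mem_insert_self _ _
    rcases Finset.mem_insert.mp this with h' | h'
    · exact σ.injective.ne (show (0:Fin 4) ≠ 1 by decide) h'
    · exact σ.injective.ne (show (0:Fin 4) ≠ 2 by decide) (Finset.mem_singleton.mp h')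
  · show (_ : ℝ) * _ = _
    rw [Finset.card_pair h03, Finset.card_pair h12, Finset.sum_pair h03, Finset.sum_pair h12, h]

lemma exists_region {x : Fin 4 → ℝ} (hx : x ∈ arrangementComplement) :
    ∃ σ b, x ∈ region σ b := by
  have hinj := inj_of_mem hx
  set σ := Tuple.sort x with hσ
  have hsm : StrictMono (x ∘ σ) :=
    (Tuple.monotone_sort x).strictMono_of_injective (hinj.comp σ.injective)
  have h01 : x (σ 0) < x (σ 1) := hsm (show (0:Fin 4) < 1 by decide)
  have h12 : x (σ 1) < x (σ 2) := hsm (show (1:Fin 4) < 2 by decide)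
  have h23 : x (σ 2) < x (σ 3) := hsm (show (2:Fin 4) < 3 by decide)
  rcases (pairsum_ne hx σ).lt_or_gt with h | h
  · exact ⟨σ, true, h01, h12, h23, by simpa using h⟩
  · exact ⟨σ, false, h01, h12, h23, by simpa using h⟩

lemma region_subset (σ : Equiv.Perm (Fin 4)) (b : Bool) :
    region σ b ⊆ arrangementComplement := by
  rintro x ⟨h1, h2, h3, h4⟩ I J hI hJ hIJ hmem
  obtain ⟨a, a', haa, rfl⟩ := Finset.card_eq_two.mp hI
  obtain ⟨c, c', hcc, rfl⟩ := Finset.card_eq_two.mp hJ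
  simp only [hyperplaneL, Set.mem_setOf_eq, Finset.card_pair haa, Finset.card_pair hcc,
    Finset.sum_pair haa, Finset.sum_pair hcc, Nat.cast_ofNat] at hmem
  have heq : x a + x a' = x c + x c' := by linarith
  have hb : x (σ 0) + x (σ 3) ≠ x (σ 1) + x (σ 2) := by
    cases b <;> simp only [if_true, if_false, Bool.false_eq_true] at h4
    · exact (ne_of_gt h4)
    · exact (ne_of_lt h4)
  refine key (fun k => x (σ k)) h1 h2 h3 hb (σ.symm a) (σ.symm a') (σ.symm c) (σ.symm c')
    (fun h => haa (σ.symm.injective h)) (fun h => hcc (σ.symm.injective h)) ?_ ?_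
  · intro h
    apply hIJ
    have := congrArg (Finset.image σ) h
    simpa [Finset.image_insert, Equiv.apply_symm_apply] using this
  · simpa [Equiv.apply_symm_apply] using heq

lemma perm_eq_id (π : Equiv.Perm (Fin 4)) (h : ∀ i j : Fin 4, i < j → π i < π j) :
    ∀ k, π k = k := by
  revert π h; decide

lemma sm_of_chain {y : Fin 4 → ℝ} (h1 : y 0 < y 1) (h2 : y 1 < y 2) (h3 : y 2 < y 3) :
    StrictMono y := by
  intro i j hij
  fin_cases i <;> fin_cases j <;> simp_all <;> linarith

lemma region_eq_of_mem {σ σ' : Equiv.Perm (Fin 4)} {b b' : Bool} {x : Fin 4 → ℝ}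
    (h : x ∈ region σ b) (h' : x ∈ region σ' b') : σ = σ' ∧ b = b' := by
  obtain ⟨h1, h2, h3, h4⟩ := h
  obtain ⟨g1, g2, g3, g4⟩ := h'
  have hsm : StrictMono (fun k => x (σ k)) := sm_of_chain h1 h2 h3
  have hsm' : StrictMono (fun k => x (σ' k)) := sm_of_chain g1 g2 g3
  have hσ : σ = σ' := by
    have hkey : ∀ i j : Fin 4, i < j → σ'.symm (σ i) < σ'.symm (σ j) := by
      intro i j hij
      by_contra hle
      rcases lt_or_eq_of_le (not_lt.mp hle) with hlt | heq
      · exact absurd (hsm hij) (not_lt.mpr (by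
          have := hsm' hlt
          simpa [Equiv.apply_symm_apply] using this.le))
      · have : σ i = σ j := by
          have := congrArg σ' heq
          simpa [Equiv.apply_symm_apply] using this.symm
        exact absurd hij (by simp [σ.injective this])
    have := perm_eq_id (σ.trans σ'.symm) hkey
    refine Equiv.ext fun k => ?_
    have hk := this k
    simpa using congrArg σ' hk
  subst hσ
  refine ⟨rfl, ?_⟩
  cases b <;> cases b' <;> simp_all <;> linarith

abbrev X := ↥arrangementComplement

noncomputable def compOf (p : Equiv.Perm (Fin 4) × Bool) : ConnectedComponents X :=
  ConnectedComponents.mk ⟨pt p.1 p.2, region_subset p.1 p.2 (pt_mem p.1 p.2)⟩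

lemma preimage_preconnected (σ : Equiv.Perm (Fin 4)) (b : Bool) :
    IsPreconnected (Subtype.val ⁻¹' region σ b : Set X) := by
  rw [← Topology.IsInducing.subtypeVal.isPreconnected_image]
  have himg : (Subtype.val '' (Subtype.val ⁻¹' region σ b : Set X)) = region σ b := by
    rw [Subtype.image_preimage_coe]
    exact Set.inter_eq_self_of_subset_right (region_subset σ b)
  rw [himg]
  exact (region_convex σ b).isPreconnected

lemma mem_component {z : X} {σ : Equiv.Perm (Fin 4)} {b : Bool} (hz : z.1 ∈ region σ b) :
    compOf (σ, b) = ConnectedComponents.mk z := by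
  show ConnectedComponents.mk _ = ConnectedComponents.mk _
  rw [ConnectedComponents.coe_eq_coe]
  apply connectedComponent_eq
  exact (preimage_preconnected σ b).subset_connectedComponent
    (show (⟨pt σ b, _⟩ : X) ∈ _ from pt_mem σ b) hz

lemma preimage_clopen (σ : Equiv.Perm (Fin 4)) (b : Bool) :
    IsClopen (Subtype.val ⁻¹' region σ b : Set X) := by
  constructor
  · rw [← isOpen_compl_iff]
    have : (Subtype.val ⁻¹' region σ b : Set X)ᶜ =
        ⋃ (p : Equiv.Perm (Fin 4) × Bool) (_ : p ≠ (σ, b)),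
          (Subtype.val ⁻¹' region p.1 p.2 : Set X) := by
      ext z
      simp only [Set.mem_compl_iff, Set.mem_preimage, Set.mem_iUnion]
      constructor
      · intro hz
        obtain ⟨σ', b', hzm⟩ := exists_region z.2
        refine ⟨(σ', b'), fun he => ?_, hzm⟩
        cases he; exact hz hzm
      · rintro ⟨p, hne, hzm⟩ hz
        obtain ⟨h1, h2⟩ := region_eq_of_mem hzm hz
        exact hne (Prod.ext h1 h2)
    rw [this]
    exact isOpen_iUnion fun p => isOpen_iUnion fun _ =>
      (region_open p.1 p.2).preimage continuous_subtype_val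
  · exact (region_open σ b).preimage continuous_subtype_val

lemma compOf_bijective : Function.Bijective compOf := by
  constructor
  · rintro ⟨σ, b⟩ ⟨σ', b'⟩ h
    simp only [compOf] at h
    have hmem : (⟨pt σ' b', region_subset σ' b' (pt_mem σ' b')⟩ : X) ∈
        connectedComponent (⟨pt σ b, region_subset σ b (pt_mem σ b)⟩ : X) := by
      rw [ConnectedComponents.coe_eq_coe] at h
      rw [h]
      exact mem_connectedComponent
    have := (preimage_clopen σ b).connectedComponent_subset
      (show (⟨pt σ b, _⟩ : X) ∈ _ from pt_mem σ b) hmem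
    obtain ⟨h1, h2⟩ := region_eq_of_mem (pt_mem σ' b') this
    exact Prod.ext h1.symm h2.symm
  · intro c
    obtain ⟨z, rfl⟩ := ConnectedComponents.surjective_coe c
    obtain ⟨σ, b, hz⟩ := exists_region z.2
    exact ⟨(σ, b), mem_component hz⟩

/-- The complement of the center-of-mass arrangement `𝒞₃²` in `ℝ⁴` has exactly 48
connected components. -/
theorem arrangementComplement_components :
    Nat.card (ConnectedComponents ↥arrangementComplement) = 48 := by
  rw [← Nat.card_eq_of_bijective compOf compOf_bijective]
  simp [Nat.card_eq_fintype_card, Fintype.card_perm, Nat.factorial]
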